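/- arXiv:0709.1341 — 4 statements merged into one kernel-verified Lean document; each statement's English description precedes it below -/
import Mathlib

section
/- Let Γ be a lattice in ℝ^d. Then OS(Γ) = {R ∈ O(d,ℝ) | αRΓ ⊆ Γ for some real α > 0} is a subgroup of O(d,ℝ): it contains the identity, is closed under products, and is closed under inverses (in particular, if αRΓ ⊆ Γ for some α > 0, then there exists β > 0 with βR⁻¹Γ ⊆ Γ). Likewise SOS(Γ) = OS(Γ) ∩ SO(d,ℝ) is a subgroup of SO(d,ℝ). -/
/-!
If `α • R` maps the lattice `Γ` into itself, then its matrix `A` in a basis of `Γ` has integer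
entries, and so does `adj A = det A • A⁻¹`. Hence `(det A / α) • R⁻¹` maps `Γ` into itself as well,
and `det A ≠ 0` since `R` is invertible. Closure under products is immediate (the scale factors
multiply), and `SO(d)` is a subgroup because `det` is multiplicative.
-/

noncomputable section

/-- `OS Γ` : the set of linear isometries `R` of ℝ^d such that `α • R Γ ⊆ Γ`
for some real `α > 0`. -/
def OS {d : ℕ} (Γ : Submodule ℤ (EuclideanSpace ℝ (Fin d))) :
    Set ((EuclideanSpace ℝ (Fin d)) ≃ₗᵢ[ℝ] (EuclideanSpace ℝ (Fin d))) :=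
  {R | ∃ α : ℝ, 0 < α ∧ ∀ x ∈ Γ, α • R x ∈ Γ}

/-- `IsRotation R` : `R` lies in SO(d,ℝ), i.e. it is orientation preserving. -/
def IsRotation {d : ℕ} (R : (EuclideanSpace ℝ (Fin d)) ≃ₗᵢ[ℝ] (EuclideanSpace ℝ (Fin d))) :
    Prop :=
  LinearMap.det (R.toLinearEquiv.toLinearMap) = 1

/-- `SOS Γ = OS Γ ∩ SO(d,ℝ)`. -/
def SOS {d : ℕ} (Γ : Submodule ℤ (EuclideanSpace ℝ (Fin d))) :
    Set ((EuclideanSpace ℝ (Fin d)) ≃ₗᵢ[ℝ] (EuclideanSpace ℝ (Fin d))) :=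
  {R | R ∈ OS Γ ∧ IsRotation R}

open Set Submodule

namespace Module.Basis

variable {ι K V : Type*} [Fintype ι] [DecidableEq ι] [AddCommGroup V]

section CommRing

variable [CommRing K] [Module K V] (b : Basis ι K V)

theorem mapsTo_span_int_toLin_map_intCast (N : Matrix ι ι ℤ) :
    MapsTo (Matrix.toLin b b (N.map (↑))) (span ℤ (range b)) (span ℤ (range b)) := by
  have h : range b ⊆
      (span ℤ (range b)).comap ((Matrix.toLin b b (N.map (↑))).restrictScalars ℤ) := by
    rintro _ ⟨j, rfl⟩
    simp only [SetLike.mem_coe, mem_comap, LinearMap.coe_restrictScalars, Matrix.toLin_self,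
      Matrix.map_apply, Int.cast_smul_eq_zsmul]
    exact sum_mem fun i _ => zsmul_mem (subset_span (mem_range_self i)) _
  exact fun x hx => span_le.mpr h hx

theorem comp_toLin_adjugate_toMatrix (T : V →ₗ[K] V) :
    T ∘ₗ Matrix.toLin b b (LinearMap.toMatrix b b T).adjugate = LinearMap.det T • LinearMap.id := by
  rw [← Matrix.toLin_toMatrix b b T, ← Matrix.toLin_mul, Matrix.toLin_toMatrix,
    Matrix.mul_adjugate, LinearMap.det_toMatrix, map_smul, Matrix.toLin_one]

end CommRing

section CharZero

variable [CommRing K] [IsDomain K] [CharZero K] [Module K V] (b : Basis ι K V)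

theorem exists_toMatrix_eq_map_intCast {T : V →ₗ[K] V}
    (hT : MapsTo T (span ℤ (range b)) (span ℤ (range b))) :
    ∃ N : Matrix ι ι ℤ, LinearMap.toMatrix b b T = N.map (↑) := by
  have hent : ∀ i j, ∃ z : ℤ, (z : K) = LinearMap.toMatrix b b T i j := fun i j => by
    simpa only [LinearMap.toMatrix_apply, algebraMap_int_eq, Int.coe_castRingHom, mem_range] using
      (b.mem_span_iff_repr_mem ℤ (T (b j))).mp (hT (subset_span (mem_range_self j))) i
  choose N hN using hent
  exact ⟨Matrix.of N, by ext i j; exact (hN i j).symm⟩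

theorem exists_mapsTo_span_int_comp_eq_det_smul {T : V →ₗ[K] V}
    (hT : MapsTo T (span ℤ (range b)) (span ℤ (range b))) :
    ∃ L : V →ₗ[K] V, MapsTo L (span ℤ (range b)) (span ℤ (range b)) ∧
      T ∘ₗ L = LinearMap.det T • LinearMap.id := by
  obtain ⟨N, hN⟩ := b.exists_toMatrix_eq_map_intCast hT
  refine ⟨_, ?_, b.comp_toLin_adjugate_toMatrix T⟩
  have hadj : (N.map (↑)).adjugate = N.adjugate.map ((↑) : ℤ → K) :=
    ((Int.castRingHom K).map_adjugate N).symm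
  rw [hN, hadj]
  exact b.mapsTo_span_int_toLin_map_intCast N.adjugate

end CharZero

section LinearOrderedField

variable [Field K] [LinearOrder K] [IsStrictOrderedRing K] [Module K V] (b : Basis ι K V)

theorem exists_pos_smul_symm_mapsTo_span_int (e : V ≃ₗ[K] V) {α : K} (hα : 0 < α)
    (he : MapsTo (fun x => α • e x) (span ℤ (range b)) (span ℤ (range b))) :
    ∃ β : K, 0 < β ∧ MapsTo (fun x => β • e.symm x) (span ℤ (range b)) (span ℤ (range b)) := by
  set T : V →ₗ[K] V := α • (e : V →ₗ[K] V)
  obtain ⟨L, hL, hTL⟩ := b.exists_mapsTo_span_int_comp_eq_det_smul (T := T) he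
  have : Module.Free K V := .of_basis b
  have hdet : LinearMap.det T ≠ 0 := by
    rw [LinearMap.det_smul]
    exact mul_ne_zero (pow_ne_zero _ hα.ne') (LinearEquiv.isUnit_det' e).ne_zero
  have hL_eq (x : V) : L x = (LinearMap.det T / α) • e.symm x := by
    have hx : α • e (L x) = LinearMap.det T • x := LinearMap.congr_fun hTL x
    calc L x = α⁻¹ • e.symm (α • e (L x)) := by
          rw [map_smul, e.symm_apply_apply, inv_smul_smul₀ hα.ne']
      _ = (LinearMap.det T / α) • e.symm x := by rw [hx, map_smul, smul_smul, div_eq_inv_mul]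
  refine ⟨|LinearMap.det T| / α, div_pos (abs_pos.mpr hdet) hα, fun x hx => ?_⟩
  dsimp only
  rcases abs_choice (LinearMap.det T) with habs | habs
  · rw [habs, ← hL_eq]
    exact hL hx
  · rw [habs, neg_div, neg_smul, ← hL_eq]
    exact neg_mem (hL hx)

end LinearOrderedField

end Module.Basis

section OrthogonalSymmetries

variable {d : ℕ}

open Module

theorem one_mem_OS (Γ : Submodule ℤ (EuclideanSpace ℝ (Fin d))) : 1 ∈ OS Γ :=
  ⟨1, one_pos, fun x hx => by simpa using hx⟩

theorem mul_mem_OS {Γ : Submodule ℤ (EuclideanSpace ℝ (Fin d))}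
    {R S : EuclideanSpace ℝ (Fin d) ≃ₗᵢ[ℝ] EuclideanSpace ℝ (Fin d)}
    (hR : R ∈ OS Γ) (hS : S ∈ OS Γ) : R * S ∈ OS Γ := by
  obtain ⟨α, hα, hRΓ⟩ := hR
  obtain ⟨α', hα', hSΓ⟩ := hS
  refine ⟨α * α', mul_pos hα hα', fun x hx => ?_⟩
  have h := hRΓ _ (hSΓ x hx)
  rwa [LinearIsometryEquiv.map_smul, smul_smul] at h

theorem inv_mem_OS_span (b : Basis (Fin d) ℝ (EuclideanSpace ℝ (Fin d)))
    {R : EuclideanSpace ℝ (Fin d) ≃ₗᵢ[ℝ] EuclideanSpace ℝ (Fin d)}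
    (hR : R ∈ OS (span ℤ (range b))) : R⁻¹ ∈ OS (span ℤ (range b)) :=
  let ⟨_, hα, hRΓ⟩ := hR
  b.exists_pos_smul_symm_mapsTo_span_int R.toLinearEquiv hα hRΓ

theorem isRotation_one :
    IsRotation (1 : EuclideanSpace ℝ (Fin d) ≃ₗᵢ[ℝ] EuclideanSpace ℝ (Fin d)) :=
  LinearMap.det_id

theorem IsRotation.mul {R S : EuclideanSpace ℝ (Fin d) ≃ₗᵢ[ℝ] EuclideanSpace ℝ (Fin d)}
    (hR : IsRotation R) (hS : IsRotation S) : IsRotation (R * S) := by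
  unfold IsRotation at *
  exact (LinearMap.det_comp _ _).trans (by rw [hR, hS, one_mul])

theorem IsRotation.inv {R : EuclideanSpace ℝ (Fin d) ≃ₗᵢ[ℝ] EuclideanSpace ℝ (Fin d)}
    (hR : IsRotation R) : IsRotation R⁻¹ := by
  have h : LinearEquiv.det R.toLinearEquiv = 1 := by
    rw [← Units.val_eq_one, LinearEquiv.coe_det]
    exact hR
  show LinearMap.det (R.toLinearEquiv.symm :
    EuclideanSpace ℝ (Fin d) →ₗ[ℝ] EuclideanSpace ℝ (Fin d)) = 1
  rw [← LinearEquiv.coe_inv_det, h, inv_one, Units.val_one]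

end OrthogonalSymmetries

theorem OS_is_subgroup (d : ℕ)
    (b : Module.Basis (Fin d) ℝ (EuclideanSpace ℝ (Fin d)))
    (Γ : Submodule ℤ (EuclideanSpace ℝ (Fin d)))
    (hΓ : Γ = Submodule.span ℤ (Set.range b)) :
    (1 ∈ OS Γ) ∧
    (∀ R S, R ∈ OS Γ → S ∈ OS Γ → R * S ∈ OS Γ) ∧
    (∀ R ∈ OS Γ, R⁻¹ ∈ OS Γ) ∧
    (∀ R : (EuclideanSpace ℝ (Fin d)) ≃ₗᵢ[ℝ] (EuclideanSpace ℝ (Fin d)),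
      (∃ α : ℝ, 0 < α ∧ ∀ x ∈ Γ, α • R x ∈ Γ) →
      ∃ β : ℝ, 0 < β ∧ ∀ x ∈ Γ, β • R⁻¹ x ∈ Γ) ∧
    (1 ∈ SOS Γ) ∧
    (∀ R S, R ∈ SOS Γ → S ∈ SOS Γ → R * S ∈ SOS Γ) ∧
    (∀ R ∈ SOS Γ, R⁻¹ ∈ SOS Γ) := by
  subst hΓ
  have inv_mem (R) (hR : R ∈ OS (span ℤ (range b))) := inv_mem_OS_span b hR
  exact ⟨one_mem_OS _, fun _ _ => mul_mem_OS, inv_mem, inv_mem, ⟨one_mem_OS _, isRotation_one⟩,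
    fun _ _ hR hS => ⟨mul_mem_OS hR.1 hS.1, hR.2.mul hS.2⟩,
    fun R hR => ⟨inv_mem R hR.1, hR.2.inv⟩⟩

end
end

section
/- Let Γ be a lattice in ℝ^d and let R ∈ O(d,ℝ) be a coincidence isometry of Γ, i.e., Γ and RΓ are commensurate. Then [Γ : Γ ∩ RΓ] = [RΓ : Γ ∩ RΓ], and, setting n = [Γ : Γ ∩ RΓ], one has n·RΓ ⊆ Γ ∩ RΓ ⊆ Γ. In particular, every coincidence isometry of Γ belongs to OS(Γ). -/
/-!
The covolume of a full-rank sublattice is its index times the covolume of the ambient lattice,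
and an isometry preserves covolumes. Hence both `[Γ : Γ ∩ RΓ]` and `[RΓ : Γ ∩ RΓ]` equal
`covol (Γ ∩ RΓ) / covol Γ`. Multiplication by the index of a subgroup kills the finite quotient,
so `n • RΓ ⊆ Γ ∩ RΓ ⊆ Γ`, i.e. `n R` maps `Γ` into itself.
-/

noncomputable section

/-- The image `R Γ` of a ℤ-submodule of ℝ^d under a linear isometry `R`. -/
def mapIso {d : ℕ} (R : (EuclideanSpace ℝ (Fin d)) ≃ₗᵢ[ℝ] (EuclideanSpace ℝ (Fin d)))
    (Γ : Submodule ℤ (EuclideanSpace ℝ (Fin d))) : Submodule ℤ (EuclideanSpace ℝ (Fin d)) :=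
  Γ.map ((R.toLinearEquiv.restrictScalars ℤ).toLinearMap)

/-- Two subgroups of ℝ^d are commensurate if their intersection has finite
index in both. -/
def Commensurate {d : ℕ} (A B : Submodule ℤ (EuclideanSpace ℝ (Fin d))) : Prop :=
  (A ⊓ B).toAddSubgroup.relIndex A.toAddSubgroup ≠ 0 ∧
  (A ⊓ B).toAddSubgroup.relIndex B.toAddSubgroup ≠ 0

open Submodule MeasureTheory

theorem Submodule.nsmul_relIndex_mem {R M : Type*} [Ring R] [AddCommGroup M] [Module R M]
    (Λ : Submodule R M) {L : Submodule R M} {x : M} (hx : x ∈ L) :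
    Λ.toAddSubgroup.relIndex L.toAddSubgroup • x ∈ Λ :=
  AddSubgroup.nsmul_relIndex_mem Λ.toAddSubgroup hx

namespace ZLattice

section NormedSpace

variable {E F : Type*} [NormedAddCommGroup E] [NormedSpace ℝ E] [NormedAddCommGroup F]
  [NormedSpace ℝ F]

theorem isZLattice_of_relIndex_ne_zero {L Λ : Submodule ℤ E} [DiscreteTopology L]
    [IsZLattice ℝ L] [DiscreteTopology Λ]
    (h : Λ.toAddSubgroup.relIndex L.toAddSubgroup ≠ 0) : IsZLattice ℝ Λ where
  span_top := by
    refine eq_top_iff.2 (IsZLattice.span_top (K := ℝ) (L := L) ▸ span_le.2 fun x hx => ?_)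
    have hn : (Λ.toAddSubgroup.relIndex L.toAddSubgroup : ℝ) ≠ 0 := Nat.cast_ne_zero.2 h
    rw [← inv_smul_smul₀ hn x, Nat.cast_smul_eq_nsmul]
    exact smul_mem _ _ (subset_span (Λ.nsmul_relIndex_mem hx))

theorem map_linearIsometryEquiv_eq_comap (L : Submodule ℤ E) (R : E ≃ₗᵢ[ℝ] F) :
    L.map (R.toLinearEquiv.restrictScalars ℤ).toLinearMap =
      ZLattice.comap ℝ L R.symm.toContinuousLinearEquiv.toLinearMap :=
  map_equiv_eq_comap_symm _ L

instance (L : Submodule ℤ E) [DiscreteTopology L] (R : E ≃ₗᵢ[ℝ] F) :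
    DiscreteTopology (L.map (R.toLinearEquiv.restrictScalars ℤ).toLinearMap) := by
  rw [map_linearIsometryEquiv_eq_comap]; infer_instance

instance (L : Submodule ℤ E) [DiscreteTopology L] [IsZLattice ℝ L] (R : E ≃ₗᵢ[ℝ] F) :
    IsZLattice ℝ (L.map (R.toLinearEquiv.restrictScalars ℤ).toLinearMap) := by
  simp_rw [map_linearIsometryEquiv_eq_comap]; infer_instance

end NormedSpace

section InnerProductSpace

variable {E F : Type*} [NormedAddCommGroup E] [InnerProductSpace ℝ E] [FiniteDimensional ℝ E]
  [MeasurableSpace E] [BorelSpace E] [NormedAddCommGroup F] [InnerProductSpace ℝ F]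
  [FiniteDimensional ℝ F] [MeasurableSpace F] [BorelSpace F]

theorem covolume_map_linearIsometryEquiv (L : Submodule ℤ E) [DiscreteTopology L]
    [IsZLattice ℝ L] (R : E ≃ₗᵢ[ℝ] F) :
    covolume (L.map (R.toLinearEquiv.restrictScalars ℤ).toLinearMap) = covolume L := by
  rw [map_linearIsometryEquiv_eq_comap]
  exact covolume_comap L volume volume R.symm.measurePreserving

theorem relIndex_inf_eq_of_covolume_eq {L M : Submodule ℤ E} [DiscreteTopology L]
    [IsZLattice ℝ L] [DiscreteTopology M] [IsZLattice ℝ M]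
    (hL : (L ⊓ M).toAddSubgroup.relIndex L.toAddSubgroup ≠ 0) (h : covolume L = covolume M) :
    (L ⊓ M).toAddSubgroup.relIndex L.toAddSubgroup =
      (L ⊓ M).toAddSubgroup.relIndex M.toAddSubgroup := by
  have : DiscreteTopology ↥(L ⊓ M) :=
    DiscreteTopology.of_subset (s := (L : Set E)) inferInstance inf_le_left
  have := isZLattice_of_relIndex_ne_zero hL
  have hdiv := covolume_div_covolume_eq_relIndex' (L ⊓ M) L inf_le_left
  rw [h, covolume_div_covolume_eq_relIndex' (L ⊓ M) M inf_le_right] at hdiv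
  exact_mod_cast hdiv.symm

end InnerProductSpace

end ZLattice

theorem coincidence_isometry_index_and_OS (d : ℕ)
    (b : Module.Basis (Fin d) ℝ (EuclideanSpace ℝ (Fin d)))
    (Γ : Submodule ℤ (EuclideanSpace ℝ (Fin d)))
    (hΓ : Γ = Submodule.span ℤ (Set.range b))
    (R : (EuclideanSpace ℝ (Fin d)) ≃ₗᵢ[ℝ] (EuclideanSpace ℝ (Fin d)))
    (hR : Commensurate Γ (mapIso R Γ)) :
    ((Γ ⊓ mapIso R Γ).toAddSubgroup.relIndex Γ.toAddSubgroup =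
      (Γ ⊓ mapIso R Γ).toAddSubgroup.relIndex (mapIso R Γ).toAddSubgroup) ∧
    (∀ x ∈ mapIso R Γ,
      ((Γ ⊓ mapIso R Γ).toAddSubgroup.relIndex Γ.toAddSubgroup : ℤ) • x ∈ Γ ⊓ mapIso R Γ) ∧
    (Γ ⊓ mapIso R Γ ≤ Γ) ∧
    (∃ α : ℝ, 0 < α ∧ ∀ x ∈ Γ, α • R x ∈ Γ) := by
  subst hΓ
  unfold Commensurate mapIso at *
  obtain ⟨hΓ_ne, hRΓ_ne⟩ := hR
  have hidx := ZLattice.relIndex_inf_eq_of_covolume_eq hΓ_ne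
    (ZLattice.covolume_map_linearIsometryEquiv _ R).symm
  refine ⟨hidx, fun x hx => ?_, inf_le_left, ?_⟩
  · rw [hidx, natCast_zsmul]
    exact nsmul_relIndex_mem _ hx
  · refine ⟨_, Nat.cast_pos.2 (Nat.pos_of_ne_zero hRΓ_ne), fun x hx => ?_⟩
    rw [Nat.cast_smul_eq_nsmul]
    exact (mem_inf.1 <| nsmul_relIndex_mem _ (mem_map_of_mem hx)).1
end
end

section
/- Let Γ be a lattice in ℝ^d and let R ∈ O(d,ℝ) satisfy αRΓ ⊆ Γ for some real α > 0, with denominator c = den_Γ(R) = min{α > 0 | αRΓ ⊆ Γ}. Then Γ and RΓ are commensurate if and only if c is a positive integer; equivalently, Γ and RΓ are commensurate if and only if nRΓ ⊆ Γ for some positive integer n. -/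
/-! The reals `α` with `α R Γ ⊆ Γ` form an additive subgroup of `ℝ`, which is generated by its least
positive element `c = den_Γ(R)`. For such an `α` the matrix of `α R` in a basis of `Γ` is integral,
so `D = det (α R) = ± α ^ d` is an integer and, by the adjugate formula, `D Γ ⊆ α R Γ`.
Hence an integer multiplier `n` gives `n ^ d Γ ⊆ Γ ∩ R Γ` and `n R Γ ⊆ Γ ∩ R Γ`, so `Γ ∩ R Γ` has
finite index in both; conversely the index of `Γ ∩ R Γ` in `R Γ` is an integer multiplier.
Finally an integer multiplier is an integer multiple of `c`, so `c` is rational with `c ^ d ∈ ℤ`,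
hence an integer. -/

noncomputable section

open Module Submodule

theorem AddSubgroup.relIndex_ne_zero_of_zsmul_mem {G : Type*} [AddCommGroup G]
    {K L : AddSubgroup G} (hL : L.FG) {m : ℤ} (hm : m ≠ 0) (h : ∀ x ∈ L, m • x ∈ K) :
    K.relIndex L ≠ 0 := by
  have : AddGroup.FG L := (AddGroup.fg_iff_addSubgroup_fg L).mpr hL
  have : Finite (L ⧸ K.addSubgroupOf L) := by
    refine AddCommGroup.finite_of_fg_isAddTorsion _ fun q ↦ ?_
    induction q using QuotientAddGroup.induction_on with
    | H x =>
      refine isOfFinAddOrder_iff_zsmul_eq_zero.mpr ⟨m, hm, ?_⟩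
      rw [← QuotientAddGroup.mk_zsmul, QuotientAddGroup.eq_zero_iff, AddSubgroup.mem_addSubgroupOf]
      exact h x x.2
  exact AddSubgroup.index_ne_zero_of_finite

theorem LinearMap.det_smul_mem_range {R M : Type*} [CommRing R] [AddCommGroup M] [Module R M]
    [Module.Free R M] [Module.Finite R M] (f : M →ₗ[R] M) (x : M) :
    LinearMap.det f • x ∈ LinearMap.range f := by
  classical
  let b := Module.Free.chooseBasis R M
  let g := Matrix.toLin b b (LinearMap.toMatrix b b f).adjugate
  have hfg : f ∘ₗ g = (LinearMap.toMatrix b b f).det • LinearMap.id := by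
    conv_lhs => rw [← Matrix.toLin_toMatrix b b f]
    rw [← Matrix.toLin_mul, Matrix.mul_adjugate, map_smul, Matrix.toLin_one]
  rw [LinearMap.det_toMatrix] at hfg
  exact ⟨g x, by simpa using LinearMap.congr_fun hfg x⟩

namespace Module.Basis

variable {ι R S M : Type*} [Fintype ι] [DecidableEq ι] [CommRing R] [IsDomain R] [CommRing S]
  [Nontrivial S] [AddCommGroup M] [Algebra R S] [Module S M] [Module R M] [IsScalarTower R S M]
  [IsTorsionFree R S] (b : Basis ι S M)

theorem toMatrix_restrict_span (f : M →ₗ[S] M)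
    (hf : ∀ x ∈ span R (Set.range b), f x ∈ span R (Set.range b)) :
    (LinearMap.toMatrix (b.restrictScalars R) (b.restrictScalars R)
      ((f.restrictScalars R).restrict hf)).map (algebraMap R S) = LinearMap.toMatrix b b f := by
  ext i j
  rw [Matrix.map_apply, LinearMap.toMatrix_apply, LinearMap.toMatrix_apply,
    restrictScalars_repr_apply]
  exact congrArg (fun v ↦ b.repr (f v) i) (restrictScalars_apply R b j)

theorem algebraMap_det_restrict_span (f : M →ₗ[S] M)
    (hf : ∀ x ∈ span R (Set.range b), f x ∈ span R (Set.range b)) :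
    algebraMap R S (LinearMap.det ((f.restrictScalars R).restrict hf)) = LinearMap.det f := by
  rw [← LinearMap.det_toMatrix (b.restrictScalars R), ← LinearMap.det_toMatrix b,
    RingHom.map_det, RingHom.mapMatrix_apply, toMatrix_restrict_span]

theorem exists_det_smul_eq_of_mapsTo (f : M →ₗ[S] M)
    (hf : ∀ x ∈ span R (Set.range b), f x ∈ span R (Set.range b)) :
    ∃ D : R, algebraMap R S D = LinearMap.det f ∧
      ∀ x ∈ span R (Set.range b), ∃ y ∈ span R (Set.range b), D • x = f y := by
  have := Module.Free.of_basis (b.restrictScalars R)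
  have := Module.Finite.of_basis (b.restrictScalars R)
  refine ⟨_, b.algebraMap_det_restrict_span f hf, fun x hx ↦ ?_⟩
  obtain ⟨y, hy⟩ := LinearMap.det_smul_mem_range ((f.restrictScalars R).restrict hf) ⟨x, hx⟩
  exact ⟨y, y.2, congrArg Subtype.val hy.symm⟩

end Module.Basis

theorem LinearIsometryEquiv.abs_det {E : Type*} [NormedAddCommGroup E] [InnerProductSpace ℝ E]
    [FiniteDimensional ℝ E] (R : E ≃ₗᵢ[ℝ] E) : |LinearMap.det R.toLinearEquiv.toLinearMap| = 1 := by
  rw [← LinearMap.normDet_eq_abs_det]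
  exact R.toLinearIsometry.normDet_eq_one

section Multipliers

variable {E : Type*} [AddCommGroup E] [Module ℝ E]

/-- `den_Γ(f)` is the least positive element of `multipliers Γ f`. -/
def multipliers (Γ : Submodule ℤ E) (f : E → E) : AddSubgroup ℝ where
  carrier := {α | ∀ x ∈ Γ, α • f x ∈ Γ}
  add_mem' ha hb x hx := by rw [add_smul]; exact add_mem (ha x hx) (hb x hx)
  zero_mem' x _ := by rw [zero_smul]; exact zero_mem Γ
  neg_mem' ha x hx := by rw [neg_smul]; exact neg_mem (ha x hx)

variable {ι : Type*} [Fintype ι] (b : Basis ι ℝ E)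

theorem exists_int_eq_pow_mul_det {f : E →ₗ[ℝ] E} {α : ℝ}
    (hα : α ∈ multipliers (span ℤ (Set.range b)) f) :
    ∃ D : ℤ, (D : ℝ) = α ^ finrank ℝ E * LinearMap.det f ∧
      ∀ x ∈ span ℤ (Set.range b), ∃ y ∈ span ℤ (Set.range b), (D : ℝ) • x = α • f y := by
  classical
  obtain ⟨D, hD, hDΓ⟩ := b.exists_det_smul_eq_of_mapsTo (R := ℤ) (α • f) hα
  refine ⟨D, by rw [← LinearMap.det_smul, ← hD, eq_intCast], fun x hx ↦ ?_⟩
  simpa only [Int.cast_smul_eq_zsmul, LinearMap.smul_apply] using hDΓ x hx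

theorem exists_nat_eq_of_isLeast_multipliers {f : E →ₗ[ℝ] E} (hdet : |LinearMap.det f| = 1)
    {c : ℝ} (hc : IsLeast {α | 0 < α ∧ α ∈ multipliers (span ℤ (Set.range b)) f} c)
    {n : ℕ} (hn : 0 < n) (hnf : (n : ℝ) ∈ multipliers (span ℤ (Set.range b)) f) :
    ∃ m : ℕ, 0 < m ∧ c = m := by
  have ⟨⟨hc0, hcf⟩, hcmin⟩ := hc
  have : Nontrivial E := by
    by_contra h
    rw [not_nontrivial_iff_subsingleton] at h
    have := hcmin ⟨half_pos hc0, fun x _ ↦ Subsingleton.elim 0 ((c / 2) • f x) ▸ zero_mem _⟩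
    linarith
  have := Module.Finite.of_basis b
  obtain ⟨k, hk⟩ : ∃ k : ℤ, k • c = n := AddSubgroup.mem_closure_singleton.mp
    (AddSubgroup.cyclic_of_min (H := multipliers _ f) (by simpa only [and_comm] using hc) ▸ hnf)
  have hk0 : (k : ℝ) ≠ 0 := by
    rintro h
    rw [zsmul_eq_mul, h, zero_mul] at hk
    exact hn.ne (by exact_mod_cast hk)
  have hc_rat : ¬ Irrational c := fun h ↦ h ⟨n / k, by
    push_cast; rw [← hk, zsmul_eq_mul]; field_simp⟩
  obtain ⟨D, hD, -⟩ := exists_int_eq_pow_mul_det b hcf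
  have hcd : c ^ finrank ℝ E = (|D| : ℤ) := by
    rw [Int.cast_abs, hD, abs_mul, hdet, mul_one, abs_of_pos (pow_pos hc0 _)]
  obtain ⟨z, rfl⟩ := not_not.mp fun h ↦ hc_rat (irrational_nrt_of_notint_nrt _ _ hcd h finrank_pos)
  have hz : 0 < z := by exact_mod_cast hc0
  exact ⟨z.toNat, by omega, by rw [← Int.cast_natCast, Int.toNat_of_nonneg hz.le]⟩

end Multipliers

section Commensurate

variable {d : ℕ} {R : EuclideanSpace ℝ (Fin d) ≃ₗᵢ[ℝ] EuclideanSpace ℝ (Fin d)}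
  {Γ : Submodule ℤ (EuclideanSpace ℝ (Fin d))}

theorem mem_mapIso {z : EuclideanSpace ℝ (Fin d)} : z ∈ mapIso R Γ ↔ ∃ y ∈ Γ, R y = z :=
  Iff.rfl

theorem natCast_smul_mem_inf_mapIso {n : ℕ} (hn : (n : ℝ) ∈ multipliers Γ R) {y} (hy : y ∈ Γ) :
    (n : ℝ) • R y ∈ Γ ⊓ mapIso R Γ :=
  ⟨hn y hy, n • y, nsmul_mem hy n, by rw [map_nsmul, Nat.cast_smul_eq_nsmul]; rfl⟩

theorem exists_natCast_mem_multipliers_of_commensurate (h : Commensurate Γ (mapIso R Γ)) :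
    ∃ n : ℕ, 0 < n ∧ (n : ℝ) ∈ multipliers Γ R := by
  refine ⟨_, Nat.pos_of_ne_zero h.2, fun x hx ↦ ?_⟩
  rw [Nat.cast_smul_eq_nsmul]
  exact (mem_inf.mp ((Γ ⊓ mapIso R Γ).toAddSubgroup.nsmul_relIndex_mem
    (K := (mapIso R Γ).toAddSubgroup) (mem_mapIso.mpr ⟨x, hx, rfl⟩))).1

theorem commensurate_mapIso_of_natCast_mem_multipliers {ι : Type*} [Fintype ι]
    {b : Basis ι ℝ (EuclideanSpace ℝ (Fin d))} {n : ℕ} (hn : 0 < n)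
    (hnR : (n : ℝ) ∈ multipliers (span ℤ (Set.range b)) R) :
    Commensurate (span ℤ (Set.range b)) (mapIso R (span ℤ (Set.range b))) := by
  have hfg : (span ℤ (Set.range b)).FG := fg_span (Set.finite_range b)
  obtain ⟨D, hD, hDΓ⟩ := exists_int_eq_pow_mul_det b (f := R.toLinearEquiv.toLinearMap) hnR
  have hD0 : (D : ℝ) ≠ 0 := by
    rw [hD]
    exact mul_ne_zero (by positivity) (abs_ne_zero.mp (by rw [R.abs_det]; exact one_ne_zero))
  refine ⟨AddSubgroup.relIndex_ne_zero_of_zsmul_mem ((fg_iff_addSubgroup_fg _).mp hfg)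
      (m := D) (by exact_mod_cast hD0) fun x hx ↦ ?_,
    AddSubgroup.relIndex_ne_zero_of_zsmul_mem ((fg_iff_addSubgroup_fg _).mp (hfg.map _))
      (m := n) (by positivity) fun z hz ↦ ?_⟩
  · obtain ⟨y, hy, hxy⟩ := hDΓ x hx
    rw [← Int.cast_smul_eq_zsmul ℝ, hxy]
    exact natCast_smul_mem_inf_mapIso hnR hy
  · obtain ⟨y, hy, rfl⟩ := mem_mapIso.mp hz
    rw [natCast_zsmul, ← Nat.cast_smul_eq_nsmul ℝ]
    exact natCast_smul_mem_inf_mapIso hnR hy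

end Commensurate

theorem commensurate_iff_denominator_integer (d : ℕ)
    (b : Module.Basis (Fin d) ℝ (EuclideanSpace ℝ (Fin d)))
    (Γ : Submodule ℤ (EuclideanSpace ℝ (Fin d)))
    (hΓ : Γ = Submodule.span ℤ (Set.range b))
    (R : (EuclideanSpace ℝ (Fin d)) ≃ₗᵢ[ℝ] (EuclideanSpace ℝ (Fin d)))
    (c : ℝ)
    (hc : IsLeast {α : ℝ | 0 < α ∧ ∀ x ∈ Γ, α • R x ∈ Γ} c) :
    (Commensurate Γ (mapIso R Γ) ↔ ∃ n : ℕ, 0 < n ∧ c = n) ∧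
    (Commensurate Γ (mapIso R Γ) ↔ ∃ n : ℕ, 0 < n ∧ ∀ x ∈ Γ, (n : ℝ) • R x ∈ Γ) := by
  subst hΓ
  have hcomm : Commensurate (span ℤ (Set.range b)) (mapIso R (span ℤ (Set.range b))) ↔
      ∃ n : ℕ, 0 < n ∧ (n : ℝ) ∈ multipliers (span ℤ (Set.range b)) R :=
    ⟨exists_natCast_mem_multipliers_of_commensurate,
      fun ⟨_, hn, hnR⟩ ↦ commensurate_mapIso_of_natCast_mem_multipliers hn hnR⟩
  refine ⟨hcomm.trans ⟨fun ⟨_, hn, hnR⟩ ↦ ?_, fun ⟨n, hn, hcn⟩ ↦ ⟨n, hn, hcn ▸ hc.1.2⟩⟩, hcomm⟩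
  exact exists_nat_eq_of_isLeast_multipliers b (f := R.toLinearEquiv.toLinearMap) R.abs_det hc
    hn hnR

end
end

section
/- Let Γ be a lattice in ℝ^d and let R₁, R₂ ∈ O(d,ℝ) be coincidence isometries of Γ, with coincidence indices Σ(R₁) and Σ(R₂). Then R₁R₂ is a coincidence isometry of Γ and Σ(R₁R₂) divides Σ(R₁)·Σ(R₂); moreover, if gcd(Σ(R₁), Σ(R₂)) = 1, then Σ(R₁R₂) = Σ(R₁)·Σ(R₂). -/
noncomputable section

/-- The coincidence index `Σ(R) = [Γ : Γ ∩ RΓ]`. -/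
def Sigma' {d : ℕ} (R : (EuclideanSpace ℝ (Fin d)) ≃ₗᵢ[ℝ] (EuclideanSpace ℝ (Fin d)))
    (Γ : Submodule ℤ (EuclideanSpace ℝ (Fin d))) : ℕ :=
  (Γ ⊓ mapIso R Γ).toAddSubgroup.relIndex Γ.toAddSubgroup

/-!
`Σ(R)` is the index of `Γ ∩ RΓ` in `Γ`. Since `R` preserves volume, `Γ` and `RΓ` have the same
covolume, so `Γ ∩ RΓ` has the same index in `RΓ` as in `Γ`; transporting by `R⁻¹` this gives
`Σ(R⁻¹) = Σ(R)`. In an abelian group `[A : A ∩ C] ∣ [A : A ∩ B] [B : B ∩ C]`, and for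
`A = Γ`, `B = R₁Γ`, `C = R₁R₂Γ` this reads `Σ(R₁R₂) ∣ Σ(R₁) Σ(R₂)`. Applied to
`R₁ = (R₁R₂)R₂⁻¹` and `R₂ = R₁⁻¹(R₁R₂)` it also gives `Σ(R₁) ∣ Σ(R₁R₂) Σ(R₂)` and
`Σ(R₂) ∣ Σ(R₁) Σ(R₁R₂)`, so when `Σ(R₁)` and `Σ(R₂)` are coprime both divide `Σ(R₁R₂)`.
-/

namespace AddSubgroup

variable {G : Type*} [AddGroup G]

theorem relIndex_dvd_of_le_right {H K L : AddSubgroup G} [H.Normal] (hKL : K ≤ L) :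
    H.relIndex K ∣ H.relIndex L := by
  rw [← relIndex_sup_right K H, ← relIndex_sup_right L H]
  exact dvd_of_mul_right_eq _
    (relIndex_mul_relIndex H (K ⊔ H) (L ⊔ H) le_sup_right (sup_le_sup_right hKL H))

theorem relIndex_dvd_relIndex_mul_relIndex (A B C : AddSubgroup G) [C.Normal] :
    C.relIndex A ∣ B.relIndex A * C.relIndex B :=
  calc C.relIndex A ∣ (C ⊓ B).relIndex A := relIndex_dvd_of_le_left A inf_le_left
    _ = C.relIndex (B ⊓ A) * B.relIndex A := (relIndex_inf_mul_relIndex C B A).symm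
    _ ∣ C.relIndex B * B.relIndex A := mul_dvd_mul_right (relIndex_dvd_of_le_right inf_le_left) _
    _ = B.relIndex A * C.relIndex B := mul_comm _ _

end AddSubgroup

theorem Submodule.span_le_span_of_relIndex_ne_zero {K E : Type*} [DivisionRing K] [CharZero K]
    [AddCommGroup E] [Module K E] {H L : Submodule ℤ E}
    (h : H.toAddSubgroup.relIndex L.toAddSubgroup ≠ 0) :
    span K (L : Set E) ≤ span K (H : Set E) := by
  refine span_le.mpr fun x hx => ?_
  obtain ⟨n, hn, -, hnx⟩ := AddSubgroup.exists_nsmul_mem_of_relIndex_ne_zero h hx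
  have : x = (n : K)⁻¹ • (n • x) := by
    rw [← Nat.cast_smul_eq_nsmul K, smul_smul, inv_mul_cancel₀ (by exact_mod_cast hn.ne'), one_smul]
  rw [this]
  exact smul_mem _ _ (subset_span hnx.1)

namespace ZLattice

open Submodule MeasureTheory

theorem isZLattice_of_relIndex_ne_zero_s4 {K E : Type*} [NormedField K] [CharZero K]
    [NormedAddCommGroup E] [NormedSpace K E] {H L : Submodule ℤ E} [DiscreteTopology H]
    [DiscreteTopology L] [IsZLattice K L] (h : H.toAddSubgroup.relIndex L.toAddSubgroup ≠ 0) :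
    IsZLattice K H :=
  ⟨top_unique ((IsZLattice.span_top (L := L)).ge.trans (span_le_span_of_relIndex_ne_zero h))⟩

variable {E : Type*} [NormedAddCommGroup E] [InnerProductSpace ℝ E] [FiniteDimensional ℝ E]
  [MeasurableSpace E] [BorelSpace E]

theorem relIndex_comm_of_covolume_eq (L₁ L₂ : Submodule ℤ E) [DiscreteTopology L₁]
    [IsZLattice ℝ L₁] [DiscreteTopology L₂] [IsZLattice ℝ L₂] (h : covolume L₁ = covolume L₂) :
    L₁.toAddSubgroup.relIndex L₂.toAddSubgroup = L₂.toAddSubgroup.relIndex L₁.toAddSubgroup := by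
  wlog h₂₁ : L₂.toAddSubgroup.relIndex L₁.toAddSubgroup ≠ 0 generalizing L₁ L₂
  · by_cases h₁₂ : L₁.toAddSubgroup.relIndex L₂.toAddSubgroup = 0
    · rw [h₁₂, not_not.mp h₂₁]
    · exact (this L₂ L₁ h.symm h₁₂).symm
  have : DiscreteTopology ↥(L₁ ⊓ L₂) :=
    DiscreteTopology.of_subset (s := (L₁ : Set E)) inferInstance inf_le_left
  have : IsZLattice ℝ (L₁ ⊓ L₂) := isZLattice_of_relIndex_ne_zero_s4 (L := L₁)
    (by rwa [← AddSubgroup.inf_relIndex_left] at h₂₁)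
  have hcov := covolume_div_covolume_eq_relIndex' (L₁ ⊓ L₂) L₁ inf_le_left
  rw [h, covolume_div_covolume_eq_relIndex' (L₁ ⊓ L₂) L₂ inf_le_right] at hcov
  have hidx : (L₁.toAddSubgroup ⊓ L₂.toAddSubgroup).relIndex L₂.toAddSubgroup =
      (L₁.toAddSubgroup ⊓ L₂.toAddSubgroup).relIndex L₁.toAddSubgroup := by
    exact_mod_cast hcov
  rwa [AddSubgroup.inf_relIndex_right, AddSubgroup.inf_relIndex_left] at hidx

theorem relIndex_map_comm (L : Submodule ℤ E) [DiscreteTopology L] [IsZLattice ℝ L]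
    (R : E ≃ₗᵢ[ℝ] E) :
    L.toAddSubgroup.relIndex (L.map (R.toLinearEquiv.restrictScalars ℤ).toLinearMap).toAddSubgroup
      = (L.map (R.toLinearEquiv.restrictScalars ℤ).toLinearMap).toAddSubgroup.relIndex
          L.toAddSubgroup := by
  have hmap : L.map (R.toLinearEquiv.restrictScalars ℤ).toLinearMap =
      ZLattice.comap ℝ L R.symm.toContinuousLinearEquiv.toLinearMap :=
    map_equiv_eq_comap_symm _ _
  rw [hmap]
  exact relIndex_comm_of_covolume_eq _ _
    (covolume_comap L volume volume R.symm.measurePreserving).symm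

end ZLattice

section CoincidenceIndex

variable {d : ℕ}

local notation "𝔼" => EuclideanSpace ℝ (Fin d)

theorem mapIso_one (A : Submodule ℤ 𝔼) : mapIso 1 A = A :=
  Submodule.map_id A

theorem mapIso_mul (R S : 𝔼 ≃ₗᵢ[ℝ] 𝔼) (A : Submodule ℤ 𝔼) :
    mapIso (R * S) A = mapIso R (mapIso S A) :=
  Submodule.map_comp (S.toLinearEquiv.restrictScalars ℤ).toLinearMap
    (R.toLinearEquiv.restrictScalars ℤ).toLinearMap A

theorem relIndex_mapIso_mapIso (R : 𝔼 ≃ₗᵢ[ℝ] 𝔼) (A B : Submodule ℤ 𝔼) :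
    (mapIso R A).toAddSubgroup.relIndex (mapIso R B).toAddSubgroup =
      A.toAddSubgroup.relIndex B.toAddSubgroup := by
  simp only [mapIso, Submodule.map_toAddSubgroup]
  exact AddSubgroup.relIndex_map_map_of_injective _ _ (R.toLinearEquiv.restrictScalars ℤ).injective

theorem sigma'_eq_relIndex (R : 𝔼 ≃ₗᵢ[ℝ] 𝔼) (Γ : Submodule ℤ 𝔼) :
    Sigma' R Γ = (mapIso R Γ).toAddSubgroup.relIndex Γ.toAddSubgroup :=
  AddSubgroup.inf_relIndex_left Γ.toAddSubgroup (mapIso R Γ).toAddSubgroup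

theorem sigma'_mul_dvd (R₁ R₂ : 𝔼 ≃ₗᵢ[ℝ] 𝔼) (Γ : Submodule ℤ 𝔼) :
    Sigma' (R₁ * R₂) Γ ∣ Sigma' R₁ Γ * Sigma' R₂ Γ := by
  rw [sigma'_eq_relIndex, sigma'_eq_relIndex, sigma'_eq_relIndex, mapIso_mul,
    ← relIndex_mapIso_mapIso R₁ (mapIso R₂ Γ) Γ]
  exact AddSubgroup.relIndex_dvd_relIndex_mul_relIndex Γ.toAddSubgroup
    (mapIso R₁ Γ).toAddSubgroup (mapIso R₁ (mapIso R₂ Γ)).toAddSubgroup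

theorem relIndex_mapIso_eq_sigma' (Γ : Submodule ℤ 𝔼) [DiscreteTopology Γ] [IsZLattice ℝ Γ]
    (R : 𝔼 ≃ₗᵢ[ℝ] 𝔼) :
    Γ.toAddSubgroup.relIndex (mapIso R Γ).toAddSubgroup = Sigma' R Γ :=
  (ZLattice.relIndex_map_comm Γ R).trans (sigma'_eq_relIndex R Γ).symm

theorem sigma'_inv (Γ : Submodule ℤ 𝔼) [DiscreteTopology Γ] [IsZLattice ℝ Γ] (R : 𝔼 ≃ₗᵢ[ℝ] 𝔼) :
    Sigma' R⁻¹ Γ = Sigma' R Γ := by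
  rw [sigma'_eq_relIndex, ← relIndex_mapIso_mapIso R, ← mapIso_mul, mul_inv_cancel, mapIso_one,
    relIndex_mapIso_eq_sigma']

theorem commensurate_of_sigma'_ne_zero (Γ : Submodule ℤ 𝔼) [DiscreteTopology Γ] [IsZLattice ℝ Γ]
    {R : 𝔼 ≃ₗᵢ[ℝ] 𝔼} (h : Sigma' R Γ ≠ 0) :
    Commensurate Γ (mapIso R Γ) :=
  ⟨h, (AddSubgroup.inf_relIndex_right Γ.toAddSubgroup (mapIso R Γ).toAddSubgroup).trans_ne
    ((relIndex_mapIso_eq_sigma' Γ R).trans_ne h)⟩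

end CoincidenceIndex

theorem coincidence_index_of_product (d : ℕ)
    (b : Module.Basis (Fin d) ℝ (EuclideanSpace ℝ (Fin d)))
    (Γ : Submodule ℤ (EuclideanSpace ℝ (Fin d)))
    (hΓ : Γ = Submodule.span ℤ (Set.range b))
    (R₁ R₂ : (EuclideanSpace ℝ (Fin d)) ≃ₗᵢ[ℝ] (EuclideanSpace ℝ (Fin d)))
    (h₁ : Commensurate Γ (mapIso R₁ Γ))
    (h₂ : Commensurate Γ (mapIso R₂ Γ)) :
    Commensurate Γ (mapIso (R₁ * R₂) Γ) ∧
    Sigma' (R₁ * R₂) Γ ∣ Sigma' R₁ Γ * Sigma' R₂ Γ ∧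
    (Nat.gcd (Sigma' R₁ Γ) (Sigma' R₂ Γ) = 1 →
      Sigma' (R₁ * R₂) Γ = Sigma' R₁ Γ * Sigma' R₂ Γ) := by
  have : DiscreteTopology Γ := by rw [hΓ]; infer_instance
  have : IsZLattice ℝ Γ := by subst hΓ; infer_instance
  have hdvd := sigma'_mul_dvd R₁ R₂ Γ
  have hne : Sigma' (R₁ * R₂) Γ ≠ 0 := ne_zero_of_dvd_ne_zero (mul_ne_zero h₁.1 h₂.1) hdvd
  refine ⟨commensurate_of_sigma'_ne_zero Γ hne, hdvd,
    fun (hcop : Nat.Coprime _ _) => hdvd.antisymm ?_⟩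
  have hdvd₁ : Sigma' R₁ Γ ∣ Sigma' (R₁ * R₂) Γ * Sigma' R₂ Γ := by
    simpa only [mul_inv_cancel_right, sigma'_inv] using sigma'_mul_dvd (R₁ * R₂) R₂⁻¹ Γ
  have hdvd₂ : Sigma' R₂ Γ ∣ Sigma' R₁ Γ * Sigma' (R₁ * R₂) Γ := by
    simpa only [inv_mul_cancel_left, sigma'_inv] using sigma'_mul_dvd R₁⁻¹ (R₁ * R₂) Γ
  exact hcop.mul_dvd_of_dvd_of_dvd (hcop.dvd_of_dvd_mul_right hdvd₁)
    (hcop.symm.dvd_of_dvd_mul_left hdvd₂)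

end
end
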